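/- arXiv:2012.03844 — 2 statements merged into one kernel-verified Lean document; each statement's English description precedes it below -/
import Mathlib

section
/- Let F : ℝⁿ → ℝ be L-smooth and μ-strongly convex, C nonempty closed convex, 0 < α ≤ 1/L, and let x* = argmin_{x∈C} F(x). With R(x) = (x − Q(x))/α the reduced gradient of the projected gradient map, for all x ∈ C: (μ/2)‖x − x*‖² + (α/2)‖R(x)‖² ≤ ⟨R(x), x − x*⟩. -/
/-!
Write `x₁ = P(x − α∇F x)` and `d = x − x₁ = α R(x)`. Chaining the descent lemma at `x₁`,
strong convexity between `x` and `x*`, and minimality of `x*` at `x₁ ∈ C` gives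
`(μ/2)‖x − x*‖² + ⟪∇F x, x* − x₁⟫ ≤ (L/2)‖d‖² ≤ ‖d‖²/(2α)`, while the variational
inequality of the projection at `x*` gives `⟪d, x* − x₁⟫ ≤ α⟪∇F x, x* − x₁⟫`.
Adding these and dividing by `α` yields the claim.
-/

open scoped RealInnerProductSpace

section

variable {E : Type*} [NormedAddCommGroup E] [InnerProductSpace ℝ E]

theorem real_inner_sub_le_zero_of_forall_norm_sub_le {K : Set E} (hK : Convex ℝ K) {u p : E}
    (hp : p ∈ K) (hmin : ∀ z ∈ K, ‖u - p‖ ≤ ‖u - z‖) : ∀ w ∈ K, ⟪u - p, w - p⟫ ≤ 0 := by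
  have : Nonempty K := ⟨⟨p, hp⟩⟩
  have hbdd : BddBelow (Set.range fun w : K => ‖u - w‖) :=
    ⟨0, by rintro _ ⟨w, rfl⟩; exact norm_nonneg _⟩
  refine (norm_eq_iInf_iff_real_inner_le_zero hK hp).1 (le_antisymm ?_ ?_)
  · exact le_ciInf fun w => hmin w w.2
  · exact ciInf_le hbdd ⟨p, hp⟩

variable [CompleteSpace E]

theorem hasDerivAt_comp_add_smul {F : E → ℝ} (hF : Differentiable ℝ F)
    (x v : E) (t : ℝ) :
    HasDerivAt (fun s : ℝ => F (x + s • v)) ⟪gradient F (x + t • v), v⟫ t := by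
  have hline : HasDerivAt (fun s : ℝ => x + s • v) v t := by
    simpa using ((hasDerivAt_id t).smul_const v).const_add x
  have h := (hF (x + t • v)).hasGradientAt.hasFDerivAt.comp_hasDerivAt t hline
  rwa [InnerProductSpace.toDual_apply_apply] at h

theorem le_add_inner_gradient_add_of_lipschitz_gradient {F : E → ℝ} (hF : Differentiable ℝ F)
    {L : ℝ} (hLip : ∀ x y, ‖gradient F x - gradient F y‖ ≤ L * ‖x - y‖) (x y : E) :
    F y ≤ F x + ⟪gradient F x, y - x⟫ + L / 2 * ‖y - x‖ ^ 2 := by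
  set v := y - x
  have hderiv := hasDerivAt_comp_add_smul hF x v
  have hbound : ∀ t ∈ Set.Ico (0 : ℝ) 1,
      ⟪gradient F (x + t • v), v⟫ ≤ ⟪gradient F x, v⟫ + L * ‖v‖ ^ 2 * t := by
    rintro t ⟨ht, -⟩
    have hcs := real_inner_le_norm (gradient F (x + t • v) - gradient F x) v
    have hlip : ‖gradient F (x + t • v) - gradient F x‖ ≤ L * (t * ‖v‖) := by
      simpa [norm_smul, abs_of_nonneg ht] using hLip (x + t • v) x
    rw [inner_sub_left] at hcs
    nlinarith [mul_le_mul_of_nonneg_right hlip (norm_nonneg v)]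
  have hB : ∀ t : ℝ, HasDerivAt
      (fun s : ℝ => F x + s * ⟪gradient F x, v⟫ + L * ‖v‖ ^ 2 / 2 * s ^ 2)
      (⟪gradient F x, v⟫ + L * ‖v‖ ^ 2 * t) t := fun t =>
    (((hasDerivAt_mul_const _).const_add _).fun_add
      ((hasDerivAt_pow 2 t).const_mul _)).congr_deriv (by norm_num; ring)
  have hend := image_le_of_deriv_right_le_deriv_boundary
    (fun t _ => (hderiv t).continuousAt.continuousWithinAt)
    (fun t _ => (hderiv t).hasDerivWithinAt) (by simp)
    (fun t _ => (hB t).continuousAt.continuousWithinAt)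
    (fun t _ => (hB t).hasDerivWithinAt) hbound (Set.right_mem_Icc.2 zero_le_one)
  rw [one_smul, add_sub_cancel, one_pow] at hend
  linarith

theorem projected_gradient_step_le_inner {F : E → ℝ} {L μ α : ℝ} {x x₁ xs : E}
    (hα : 0 < α) (hLα : L * α ≤ 1)
    (hdescent : F x₁ ≤ F x + ⟪gradient F x, x₁ - x⟫ + L / 2 * ‖x₁ - x‖ ^ 2)
    (hsconv : F x + ⟪gradient F x, xs - x⟫ + μ / 2 * ‖xs - x‖ ^ 2 ≤ F xs)
    (hmin : F xs ≤ F x₁) (hproj : ⟪x - α • gradient F x - x₁, xs - x₁⟫ ≤ 0) :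
    α * (μ / 2 * ‖x - xs‖ ^ 2) + ‖x - x₁‖ ^ 2 / 2 ≤ ⟪x - x₁, x - xs⟫ := by
  set g := gradient F x
  set d := x - x₁
  have hval : μ / 2 * ‖xs - x‖ ^ 2 + ⟪g, xs - x⟫ + ⟪g, d⟫ ≤ L / 2 * ‖d‖ ^ 2 := by
    rw [show x₁ - x = -d by simp [d], norm_neg, inner_neg_right] at hdescent
    linarith
  rw [show x - α • g - x₁ = d - α • g by simp [d, sub_right_comm],
    show xs - x₁ = (xs - x) + d by simp [d]] at hproj
  simp only [inner_add_right, inner_sub_left, real_inner_smul_left,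
    real_inner_self_eq_norm_sq] at hproj
  rw [← neg_sub xs x, inner_neg_right, norm_neg]
  linarith [mul_le_mul_of_nonneg_left hval hα.le,
    mul_le_mul_of_nonneg_right hLα (sq_nonneg ‖d‖)]

end

theorem stmt_3_general {n : ℕ} (F : EuclideanSpace ℝ (Fin n) → ℝ)
    (hF_diff : ContDiff ℝ 1 F)
    (L μ : ℝ) (hL : 0 < L)
    (hF_smooth : ∀ x y, ‖gradient F x - gradient F y‖ ≤ L * ‖x - y‖)
    (hF_sconv : ∀ x y, F x + ⟪gradient F x, y - x⟫ + μ / 2 * ‖y - x‖ ^ 2 ≤ F y)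
    (C : Set (EuclideanSpace ℝ (Fin n)))
    (hC_convex : Convex ℝ C)
    (P : EuclideanSpace ℝ (Fin n) → EuclideanSpace ℝ (Fin n))
    (hP_mem : ∀ y, P y ∈ C)
    (hP_min : ∀ y, ∀ z ∈ C, ‖y - P y‖ ≤ ‖y - z‖)
    (α : ℝ) (hα : 0 < α) (hαL : α ≤ 1 / L)
    (xs : EuclideanSpace ℝ (Fin n)) (hxs_mem : xs ∈ C)
    (hxs_min : ∀ x ∈ C, F xs ≤ F x) :
    ∀ x ∈ C,
      μ / 2 * ‖x - xs‖ ^ 2 +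
          α / 2 * ‖α⁻¹ • (x - P (x - α • gradient F x))‖ ^ 2 ≤
        ⟪α⁻¹ • (x - P (x - α • gradient F x)), x - xs⟫ := by
  intro x _
  set x₁ := P (x - α • gradient F x)
  have hLα : L * α ≤ 1 := by rwa [le_div_iff₀ hL, mul_comm] at hαL
  have hstep := projected_gradient_step_le_inner hα hLα
    (le_add_inner_gradient_add_of_lipschitz_gradient hF_diff.differentiable_one hF_smooth x x₁)
    (hF_sconv x xs) (hxs_min x₁ (hP_mem _))
    (real_inner_sub_le_zero_of_forall_norm_sub_le hC_convex (hP_mem _) (hP_min _) xs hxs_mem)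
  rw [norm_smul, real_inner_smul_left, Real.norm_eq_abs, abs_of_pos (inv_pos.2 hα)]
  calc μ / 2 * ‖x - xs‖ ^ 2 + α / 2 * (α⁻¹ * ‖x - x₁‖) ^ 2
      = α⁻¹ * (α * (μ / 2 * ‖x - xs‖ ^ 2) + ‖x - x₁‖ ^ 2 / 2) := by field_simp
    _ ≤ α⁻¹ * ⟪x - x₁, x - xs⟫ := by gcongr

/-- Strong-convexity identity for the reduced gradient: if `F` is `L`-smooth and
`μ`-strongly convex, `0 < α ≤ 1/L`, and `x*` minimizes `F` over the nonempty closed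
convex set `C`, then for all `x ∈ C`,
`(μ/2)‖x − x*‖² + (α/2)‖R x‖² ≤ ⟪R x, x − x*⟫` where `R x = (x − P(x − α∇F x))/α`. -/
theorem stmt_3 {n : ℕ} (F : EuclideanSpace ℝ (Fin n) → ℝ)
    (hF_diff : ContDiff ℝ 1 F)
    (L μ : ℝ) (hL : 0 < L) (hμ : 0 < μ)
    (hF_smooth : ∀ x y, ‖gradient F x - gradient F y‖ ≤ L * ‖x - y‖)
    (hF_sconv : ∀ x y, F x + ⟪gradient F x, y - x⟫ + μ / 2 * ‖y - x‖ ^ 2 ≤ F y)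
    (C : Set (EuclideanSpace ℝ (Fin n)))
    (hC_ne : C.Nonempty) (hC_closed : IsClosed C) (hC_convex : Convex ℝ C)
    (P : EuclideanSpace ℝ (Fin n) → EuclideanSpace ℝ (Fin n))
    (hP_mem : ∀ y, P y ∈ C)
    (hP_min : ∀ y, ∀ z ∈ C, ‖y - P y‖ ≤ ‖y - z‖)
    (α : ℝ) (hα : 0 < α) (hαL : α ≤ 1 / L)
    (xs : EuclideanSpace ℝ (Fin n)) (hxs_mem : xs ∈ C)
    (hxs_min : ∀ x ∈ C, F xs ≤ F x) :
    ∀ x ∈ C,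
      μ / 2 * ‖x - xs‖ ^ 2 +
          α / 2 * ‖α⁻¹ • (x - P (x - α • gradient F x))‖ ^ 2 ≤
        ⟪α⁻¹ • (x - P (x - α • gradient F x)), x - xs⟫ :=
  stmt_3_general F hF_diff L μ hL hF_smooth hF_sconv C hC_convex P hP_mem hP_min α hα hαL xs hxs_mem
    hxs_min
end

section
/- Let F : ℝⁿ → ℝ be L-smooth and bounded in gradient norm by M > 0 on an open set containing the iterates. Let C ⊆ ℝⁿ be closed convex, α > 0, and let x_{k+1} = Q_{S_k}(x_k) be the SPGD iterate with sample set S_k. If E_k‖R_{S_k}(x_k)‖² ≤ (1+ν²)‖R(x_k)‖² and ‖E_k[Q_{S_k}(x_k) − Q(x_k)]‖ ≤ (γ²/2)‖Q(x_k)−x_k‖², then E_k[F(x_{k+1})] − F(x_k) ≤ −c‖Q(x_k)−x_k‖² with c = 1/α − (L/2)(1+ν²) − (M/2)γ². In particular, if α ≤ 2/(Mγ² + L(1+ν²)), then E_k[F(x_{k+1})] ≤ F(x_k). -/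
/-!
By the descent lemma `F y ≤ F x + ⟪∇F x, y - x⟫ + (L/2)‖y - x‖²`, taking expectations reduces the
claim to bounds on the mean displacement `E[x₊] - x` and the second moment `E‖x₊ - x‖²`. The
second moment is at most `(1 + ν²)‖Q x - x‖²` by the norm condition. The mean displacement splits
as `(E[x₊] - Q x) + (Q x - x)`: the first part is controlled by the bias condition and `‖∇F x‖ ≤ M`,
and on the second the variational inequality of the projection gives
`⟪∇F x, Q x - x⟫ ≤ -‖Q x - x‖² / α`.
-/

open MeasureTheory
open scoped RealInnerProductSpace

section

variable {E : Type*} [NormedAddCommGroup E] [InnerProductSpace ℝ E]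

theorem le_add_inner_gradient_add_sq_of_norm_gradient_sub_le [CompleteSpace E] {F : E → ℝ}
    (hF : Differentiable ℝ F) {L : ℝ} {x : E}
    (hL : ∀ z, ‖gradient F z - gradient F x‖ ≤ L * ‖z - x‖) (y : E) :
    F y ≤ F x + ⟪gradient F x, y - x⟫ + L / 2 * ‖y - x‖ ^ 2 := by
  set v := y - x
  have hline (t : ℝ) : HasDerivAt (fun t : ℝ => x + t • v) v t := by
    simpa using ((hasDerivAt_id t).smul_const v).const_add x
  have hderiv (t : ℝ) :
      HasDerivAt (fun t : ℝ => F (x + t • v)) ⟪gradient F (x + t • v), v⟫ t := by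
    have hchain := (hF _).hasGradientAt.hasFDerivAt.comp_hasDerivAt t (hline t)
    rwa [InnerProductSpace.toDual_apply_apply] at hchain
  have hbound : ∀ t ∈ Set.Ico (0 : ℝ) 1,
      ⟪gradient F (x + t • v), v⟫ ≤ ⟪gradient F x, v⟫ + L * ‖v‖ ^ 2 * t := by
    intro t ht
    have hlip : ‖gradient F (x + t • v) - gradient F x‖ ≤ L * (t * ‖v‖) := by
      simpa [norm_smul, abs_of_nonneg ht.1] using hL (x + t • v)
    calc ⟪gradient F (x + t • v), v⟫
        = ⟪gradient F x, v⟫ + ⟪gradient F (x + t • v) - gradient F x, v⟫ := by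
          rw [inner_sub_left]; ring
      _ ≤ ⟪gradient F x, v⟫ + ‖gradient F (x + t • v) - gradient F x‖ * ‖v‖ := by
          gcongr; exact real_inner_le_norm _ _
      _ ≤ ⟪gradient F x, v⟫ + L * (t * ‖v‖) * ‖v‖ := by gcongr
      _ = ⟪gradient F x, v⟫ + L * ‖v‖ ^ 2 * t := by ring
  have hquad (t : ℝ) : HasDerivAt
      (fun t : ℝ => F x + t * ⟪gradient F x, v⟫ + L / 2 * ‖v‖ ^ 2 * t ^ 2)
      (⟪gradient F x, v⟫ + L * ‖v‖ ^ 2 * t) t := by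
    refine ((((hasDerivAt_id' t).mul_const ⟪gradient F x, v⟫).const_add (F x)).add
      ((hasDerivAt_pow 2 t).const_mul (L / 2 * ‖v‖ ^ 2))).congr_deriv ?_
    push_cast; ring
  have hcompare := image_le_of_deriv_right_le_deriv_boundary
    (fun t _ => (hderiv t).continuousAt.continuousWithinAt)
    (fun t _ => (hderiv t).hasDerivWithinAt) (by simp)
    (fun t _ => (hquad t).continuousAt.continuousWithinAt)
    (fun t _ => (hquad t).hasDerivWithinAt) hbound (Set.right_mem_Icc.2 zero_le_one)
  simpa [v] using hcompare

theorem real_inner_sub_le_neg_one_div_mul_norm_sq_of_nearest {K : Set E} (hK : Convex ℝ K)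
    {x g p : E} {α : ℝ} (hα : 0 < α) (hx : x ∈ K) (hp : p ∈ K)
    (hmin : ∀ z ∈ K, ‖x - α • g - p‖ ≤ ‖x - α • g - z‖) :
    ⟪g, p - x⟫ ≤ -(1 / α) * ‖p - x‖ ^ 2 := by
  have : Nonempty K := ⟨⟨x, hx⟩⟩
  have hinf : ‖x - α • g - p‖ = ⨅ z : K, ‖x - α • g - z‖ :=
    le_antisymm (le_ciInf fun z => hmin z z.2)
      (ciInf_le (f := fun z : K => ‖x - α • g - z‖)
        ⟨0, by rintro _ ⟨z, rfl⟩; exact norm_nonneg _⟩ ⟨p, hp⟩)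
  have hvar := (norm_eq_iInf_iff_real_inner_le_zero hK hp).1 hinf x hx
  have hsplit : ⟪x - α • g - p, x - p⟫ = ‖p - x‖ ^ 2 + α * ⟪g, p - x⟫ := by
    rw [show x - α • g - p = (x - p) - α • g by abel, inner_sub_left, real_inner_smul_left,
      real_inner_self_eq_norm_sq, norm_sub_rev, ← neg_sub p x, inner_neg_right]
    ring
  rw [neg_mul, one_div_mul_eq_div, le_neg, div_le_iff₀ hα]
  linarith

theorem norm_inv_smul_sub_sq (α : ℝ) (x z : E) :
    ‖α⁻¹ • (x - z)‖ ^ 2 = α⁻¹ ^ 2 * ‖z - x‖ ^ 2 := by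
  rw [norm_smul, norm_sub_rev, mul_pow, Real.norm_eq_abs, sq_abs]

variable {Ω : Type*} [MeasurableSpace Ω] {μ : Measure Ω}

theorem integrable_norm_sub_sq_of_integrable_norm_inv_smul_sub_sq {α : ℝ} (hα : α ≠ 0) {x : E}
    {X : Ω → E} (h : Integrable (fun ω => ‖α⁻¹ • (x - X ω)‖ ^ 2) μ) :
    Integrable (fun ω => ‖X ω - x‖ ^ 2) μ := by
  simp_rw [norm_inv_smul_sub_sq] at h
  exact (integrable_const_mul_iff (isUnit_iff_ne_zero.2 (pow_ne_zero 2 (inv_ne_zero hα))) _).1 h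

theorem integral_norm_sub_sq_le_of_integral_norm_inv_smul_sub_sq_le {α c : ℝ} (hα : α ≠ 0)
    {x q : E} {X : Ω → E}
    (h : ∫ ω, ‖α⁻¹ • (x - X ω)‖ ^ 2 ∂μ ≤ c * ‖α⁻¹ • (x - q)‖ ^ 2) :
    ∫ ω, ‖X ω - x‖ ^ 2 ∂μ ≤ c * ‖q - x‖ ^ 2 := by
  simp_rw [norm_inv_smul_sub_sq, integral_const_mul, mul_left_comm c] at h
  exact le_of_mul_le_mul_left h (by positivity)

theorem integral_comp_le_add_inner_integral_sub_add [CompleteSpace E] [IsProbabilityMeasure μ]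
    {F : E → ℝ} (hF : Differentiable ℝ F) {L : ℝ} {x : E}
    (hL : ∀ z, ‖gradient F z - gradient F x‖ ≤ L * ‖z - x‖) {X : Ω → E} (hX : Integrable X μ)
    (hFX : Integrable (fun ω => F (X ω)) μ) (hX2 : Integrable (fun ω => ‖X ω - x‖ ^ 2) μ) :
    ∫ ω, F (X ω) ∂μ ≤
      F x + ⟪gradient F x, (∫ ω, X ω ∂μ) - x⟫ + L / 2 * ∫ ω, ‖X ω - x‖ ^ 2 ∂μ := by
  have hinner : Integrable (fun ω => ⟪gradient F x, X ω - x⟫) μ :=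
    (hX.sub (integrable_const x)).const_inner _
  have hlin : Integrable (fun ω => F x + ⟪gradient F x, X ω - x⟫) μ :=
    (integrable_const _).add hinner
  calc ∫ ω, F (X ω) ∂μ
      ≤ ∫ ω, (F x + ⟪gradient F x, X ω - x⟫ + L / 2 * ‖X ω - x‖ ^ 2) ∂μ :=
        integral_mono hFX (hlin.add (hX2.const_mul _))
          fun ω => le_add_inner_gradient_add_sq_of_norm_gradient_sub_le hF hL (X ω)
    _ = F x + ⟪gradient F x, (∫ ω, X ω ∂μ) - x⟫ + L / 2 * ∫ ω, ‖X ω - x‖ ^ 2 ∂μ := by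
        rw [integral_add hlin (hX2.const_mul _),
          integral_add (integrable_const _) hinner, integral_const_mul, integral_const,
          integral_inner (f := fun ω => X ω - x) (hX.sub (integrable_const x)),
          integral_sub hX (integrable_const x), integral_const]
        simp

end

theorem stmt_9_general {n : ℕ} {Ω : Type*} [MeasurableSpace Ω]
    (μ : Measure Ω) [IsProbabilityMeasure μ]
    (F : EuclideanSpace ℝ (Fin n) → ℝ) (hF_diff : ContDiff ℝ 1 F)
    (L : ℝ) (hL : 0 < L)
    (hF_smooth : ∀ x y, ‖gradient F x - gradient F y‖ ≤ L * ‖x - y‖)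
    (C : Set (EuclideanSpace ℝ (Fin n)))
    (hC_convex : Convex ℝ C)
    (P : EuclideanSpace ℝ (Fin n) → EuclideanSpace ℝ (Fin n))
    (hP_mem : ∀ y, P y ∈ C)
    (hP_min : ∀ y, ∀ z ∈ C, ‖y - P y‖ ≤ ‖y - z‖)
    (α : ℝ) (hα : 0 < α)
    (x : EuclideanSpace ℝ (Fin n)) (hx : x ∈ C)
    -- the random subsampled projected-gradient step `x₊ = Q_S(x)`
    (Qs : Ω → EuclideanSpace ℝ (Fin n))
    (hQs_int : Integrable Qs μ)
    (hFQs_int : Integrable (fun ω => F (Qs ω)) μ)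
    (hRs_int : Integrable (fun ω => ‖α⁻¹ • (x - Qs ω)‖ ^ 2) μ)
    -- gradient bound on an open set containing the iterates
    (M : ℝ) (U : Set (EuclideanSpace ℝ (Fin n)))
    (hxU : x ∈ U)
    (hgrad_bdd : ∀ y ∈ U, ‖gradient F y‖ ≤ M)
    (ν γ : ℝ)
    (hnorm : ∫ ω, ‖α⁻¹ • (x - Qs ω)‖ ^ 2 ∂μ ≤
      (1 + ν ^ 2) * ‖α⁻¹ • (x - P (x - α • gradient F x))‖ ^ 2)
    (hbias : ‖∫ ω, (Qs ω - P (x - α • gradient F x)) ∂μ‖ ≤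
      γ ^ 2 / 2 * ‖P (x - α • gradient F x) - x‖ ^ 2) :
    (∫ ω, F (Qs ω) ∂μ) - F x ≤
        -(1 / α - L / 2 * (1 + ν ^ 2) - M / 2 * γ ^ 2) *
          ‖P (x - α • gradient F x) - x‖ ^ 2 ∧
      (α ≤ 2 / (M * γ ^ 2 + L * (1 + ν ^ 2)) → ∫ ω, F (Qs ω) ∂μ ≤ F x) := by
  set g := gradient F x
  set Q := P (x - α • g)
  have hgM : ‖g‖ ≤ M := hgrad_bdd x hxU
  have hdesc := integral_comp_le_add_inner_integral_sub_add (hF_diff.differentiable one_ne_zero)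
    (fun z => hF_smooth z x) hQs_int hFQs_int
    (integrable_norm_sub_sq_of_integrable_norm_inv_smul_sub_sq hα.ne' hRs_int)
  have hsecond : L / 2 * ∫ ω, ‖Qs ω - x‖ ^ 2 ∂μ ≤ L / 2 * ((1 + ν ^ 2) * ‖Q - x‖ ^ 2) :=
    mul_le_mul_of_nonneg_left
      (integral_norm_sub_sq_le_of_integral_norm_inv_smul_sub_sq_le hα.ne' hnorm) (by positivity)
  have hmean : ⟪g, (∫ ω, Qs ω ∂μ) - x⟫ ≤ M * (γ ^ 2 / 2 * ‖Q - x‖ ^ 2) - 1 / α * ‖Q - x‖ ^ 2 := by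
    rw [integral_sub hQs_int (integrable_const Q), integral_const, probReal_univ, one_smul]
      at hbias
    have hdrift := (real_inner_le_norm g _).trans
      (mul_le_mul hgM hbias (norm_nonneg _) ((norm_nonneg _).trans hgM))
    have hproj : ⟪g, Q - x⟫ ≤ -(1 / α) * ‖Q - x‖ ^ 2 :=
      real_inner_sub_le_neg_one_div_mul_norm_sq_of_nearest hC_convex hα hx (hP_mem _) (hP_min _)
    rw [← sub_add_sub_cancel _ Q x, inner_add_right]
    linarith
  have hmain : (∫ ω, F (Qs ω) ∂μ) - F x ≤
      -(1 / α - L / 2 * (1 + ν ^ 2) - M / 2 * γ ^ 2) * ‖Q - x‖ ^ 2 := by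
    linarith
  refine ⟨hmain, fun hαS => ?_⟩
  have hstep : (M * γ ^ 2 + L * (1 + ν ^ 2)) / 2 ≤ 1 / α := by
    simpa only [one_div_div] using one_div_le_one_div_of_le hα hαS
  linarith [mul_nonneg (sub_nonneg.2 hstep) (sq_nonneg ‖Q - x‖)]

/-- One-step descent of adaptive-sampling SPGD: under the norm condition
`E‖R_S(x)‖² ≤ (1+ν²)‖R x‖²` and the bias condition
`‖E[Q_S(x) − Q x]‖ ≤ (γ²/2)‖Q x − x‖²`, one has
`E[F(x₊)] − F x ≤ −c‖Q x − x‖²` with `c = 1/α − (L/2)(1+ν²) − (M/2)γ²`;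
in particular `E[F(x₊)] ≤ F x` whenever `α ≤ 2/(Mγ² + L(1+ν²))`. -/
theorem stmt_9 {n : ℕ} {Ω : Type*} [MeasurableSpace Ω]
    (μ : Measure Ω) [IsProbabilityMeasure μ]
    (F : EuclideanSpace ℝ (Fin n) → ℝ) (hF_diff : ContDiff ℝ 1 F)
    (L : ℝ) (hL : 0 < L)
    (hF_smooth : ∀ x y, ‖gradient F x - gradient F y‖ ≤ L * ‖x - y‖)
    (C : Set (EuclideanSpace ℝ (Fin n)))
    (hC_ne : C.Nonempty) (hC_closed : IsClosed C) (hC_convex : Convex ℝ C)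
    (P : EuclideanSpace ℝ (Fin n) → EuclideanSpace ℝ (Fin n))
    (hP_mem : ∀ y, P y ∈ C)
    (hP_min : ∀ y, ∀ z ∈ C, ‖y - P y‖ ≤ ‖y - z‖)
    (α : ℝ) (hα : 0 < α)
    (x : EuclideanSpace ℝ (Fin n)) (hx : x ∈ C)
    -- the random subsampled projected-gradient step `x₊ = Q_S(x)`
    (Qs : Ω → EuclideanSpace ℝ (Fin n))
    (hQs_mem : ∀ ω, Qs ω ∈ C)
    (hQs_int : Integrable Qs μ)
    (hFQs_int : Integrable (fun ω => F (Qs ω)) μ)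
    (hRs_int : Integrable (fun ω => ‖α⁻¹ • (x - Qs ω)‖ ^ 2) μ)
    -- gradient bound on an open set containing the iterates
    (M : ℝ) (hM : 0 < M) (U : Set (EuclideanSpace ℝ (Fin n))) (hU : IsOpen U)
    (hxU : x ∈ U) (hQsU : ∀ ω, Qs ω ∈ U)
    (hgrad_bdd : ∀ y ∈ U, ‖gradient F y‖ ≤ M)
    (ν γ : ℝ) (hν : 0 < ν) (hγ : 0 < γ)
    (hnorm : ∫ ω, ‖α⁻¹ • (x - Qs ω)‖ ^ 2 ∂μ ≤
      (1 + ν ^ 2) * ‖α⁻¹ • (x - P (x - α • gradient F x))‖ ^ 2)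
    (hbias : ‖∫ ω, (Qs ω - P (x - α • gradient F x)) ∂μ‖ ≤
      γ ^ 2 / 2 * ‖P (x - α • gradient F x) - x‖ ^ 2) :
    (∫ ω, F (Qs ω) ∂μ) - F x ≤
        -(1 / α - L / 2 * (1 + ν ^ 2) - M / 2 * γ ^ 2) *
          ‖P (x - α • gradient F x) - x‖ ^ 2 ∧
      (α ≤ 2 / (M * γ ^ 2 + L * (1 + ν ^ 2)) → ∫ ω, F (Qs ω) ∂μ ≤ F x) :=
  stmt_9_general μ F hF_diff L hL hF_smooth C hC_convex P hP_mem hP_min α hα x hx Qs hQs_int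
    hFQs_int hRs_int M U hxU hgrad_bdd ν γ hnorm hbias
end
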